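/- Let S and A be finite types and consider two Markov decision processes on S and A with a common initial distribution ρ₀, transition kernels T¹, T² : S × A → PMF(S), and policies π¹, π² : S → PMF(A). Let ε_T, ε_π, ε_S, C_T, C_π ≥ 0 and suppose D_TV(T¹(s,a), T²(s,a)) ≤ ε_T + C_T · ε_S for all s, a, and D_TV(π¹(s), π²(s)) ≤ ε_π + (1/2) · C_π · ε_S for all s. Let r : S × A → ℝ satisfy |r(s,a)| ≤ R for all s, a, let γ ∈ [0,1), and let G¹(π¹) and G²(π²) denote the discounted returns of π¹ under T¹ and of π² under T², respectively. Then |G¹(π¹) − G²(π²)| ≤ Rγ[2ε_π + 2ε_T + (C_π + 2C_T)ε_S]/(1 − γ)² + R(2ε_π + C_π ε_S)/(1 − γ). -/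

import Mathlib

/-!
The state and state-action marginals of the two processes drift apart by at most
`δπ + δT` per step, where `δπ` and `δT` are the policy and dynamics errors: replacing `π¹` by
`π²` in `p_t(s,a) = μ_t(s) π(s)(a)` costs `δπ`, and replacing `T¹` by `T²` in
`μ_{t+1} = ∑ p_t T` costs `δT`, both by the coupling estimate
`|m₁x₁ - m₂x₂| ≤ |m₁ - m₂| x₁ + m₂ |x₁ - x₂|`. Hence `D_TV(p¹_t, p²_t) ≤ t(δπ + δT) + δπ`, the
per-step expected rewards differ by at most `2R` times that, and summing against `γ^t` with
`∑ t γ^t = 1/(1-γ)` and `∑ t t γ^t = γ/(1-γ)²` gives the bound.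
-/

open scoped BigOperators

/-- Total variation distance between two PMFs on a finite type. -/
noncomputable def tv {X : Type*} [Fintype X] (p q : PMF X) : ℝ :=
  (1 / 2) * ∑ x, |(p x).toReal - (q x).toReal|

lemma PMF.sum_toReal {X : Type*} [Fintype X] (p : PMF X) : ∑ x, (p x).toReal = 1 := by
  rw [← ENNReal.toReal_sum fun x _ => p.apply_ne_top x, ← tsum_fintype (L := .unconditional X),
    p.tsum_coe, ENNReal.toReal_one]

lemma sum_abs_toReal_sub_eq_two_mul_tv {X : Type*} [Fintype X] (p q : PMF X) :
    ∑ x, |(p x).toReal - (q x).toReal| = 2 * tv p q := by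
  rw [tv]; ring

lemma tv_self {X : Type*} [Fintype X] (p : PMF X) : tv p p = 0 := by
  simp [tv]

lemma abs_mul_sub_mul_le {m₁ m₂ x y : ℝ} (hx : 0 ≤ x) (hm : 0 ≤ m₂) :
    |m₁ * x - m₂ * y| ≤ |m₁ - m₂| * x + m₂ * |x - y| :=
  calc |m₁ * x - m₂ * y| = |(m₁ - m₂) * x + m₂ * (x - y)| := by ring_nf
    _ ≤ |(m₁ - m₂) * x| + |m₂ * (x - y)| := abs_add_le _ _
    _ = |m₁ - m₂| * x + m₂ * |x - y| := by rw [abs_mul, abs_mul, abs_of_nonneg hx, abs_of_nonneg hm]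

section Coupling

variable {X Y : Type*} [Fintype X] [Fintype Y] {q₁ q₂ : PMF X} {K₁ K₂ : X → PMF Y} {δ : ℝ}

lemma sum_sum_abs_toReal_mul_sub_le (hK : ∀ x, tv (K₁ x) (K₂ x) ≤ δ) :
    ∑ x, ∑ y, |(q₁ x).toReal * (K₁ x y).toReal - (q₂ x).toReal * (K₂ x y).toReal| ≤
      2 * (tv q₁ q₂ + δ) := by
  have hrow : ∀ x, ∑ y, |(q₁ x).toReal * (K₁ x y).toReal - (q₂ x).toReal * (K₂ x y).toReal| ≤
      |(q₁ x).toReal - (q₂ x).toReal| + (q₂ x).toReal * (2 * δ) := fun x =>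
    calc _ ≤ ∑ y, (|(q₁ x).toReal - (q₂ x).toReal| * (K₁ x y).toReal +
            (q₂ x).toReal * |(K₁ x y).toReal - (K₂ x y).toReal|) :=
          Finset.sum_le_sum fun y _ =>
            abs_mul_sub_mul_le ENNReal.toReal_nonneg ENNReal.toReal_nonneg
      _ = |(q₁ x).toReal - (q₂ x).toReal| + (q₂ x).toReal * (2 * tv (K₁ x) (K₂ x)) := by
          rw [Finset.sum_add_distrib, ← Finset.mul_sum, ← Finset.mul_sum, PMF.sum_toReal,
            sum_abs_toReal_sub_eq_two_mul_tv, mul_one]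
      _ ≤ _ := by gcongr; exact hK x
  calc _ ≤ ∑ x, (|(q₁ x).toReal - (q₂ x).toReal| + (q₂ x).toReal * (2 * δ)) :=
        Finset.sum_le_sum fun x _ => hrow x
    _ = 2 * (tv q₁ q₂ + δ) := by
        rw [Finset.sum_add_distrib, ← Finset.sum_mul, sum_abs_toReal_sub_eq_two_mul_tv,
          PMF.sum_toReal]
        ring

lemma tv_le_of_apply_eq_mul {p₁ p₂ : PMF (X × Y)} (hK : ∀ x, tv (K₁ x) (K₂ x) ≤ δ)
    (hp₁ : ∀ x y, p₁ (x, y) = q₁ x * K₁ x y) (hp₂ : ∀ x y, p₂ (x, y) = q₂ x * K₂ x y) :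
    tv p₁ p₂ ≤ tv q₁ q₂ + δ := by
  have h := sum_sum_abs_toReal_mul_sub_le (q₁ := q₁) (q₂ := q₂) hK
  simp only [← ENNReal.toReal_mul, ← hp₁, ← hp₂, ← Fintype.sum_prod_type',
    sum_abs_toReal_sub_eq_two_mul_tv] at h
  linarith

lemma tv_le_of_apply_eq_sum_mul {ν₁ ν₂ : PMF Y} (hK : ∀ x, tv (K₁ x) (K₂ x) ≤ δ)
    (hν₁ : ∀ y, ν₁ y = ∑ x, q₁ x * K₁ x y) (hν₂ : ∀ y, ν₂ y = ∑ x, q₂ x * K₂ x y) :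
    tv ν₁ ν₂ ≤ tv q₁ q₂ + δ := by
  have toReal_apply : ∀ (ν : PMF Y) (q : PMF X) (K : X → PMF Y),
      (∀ y, ν y = ∑ x, q x * K x y) → ∀ y, (ν y).toReal = ∑ x, (q x).toReal * (K x y).toReal :=
    fun ν q K hν y => by
      rw [hν, ENNReal.toReal_sum fun x _ => ENNReal.mul_ne_top (q.apply_ne_top x)
        ((K x).apply_ne_top y)]
      simp only [ENNReal.toReal_mul]
  have h : 2 * tv ν₁ ν₂ ≤ 2 * (tv q₁ q₂ + δ) :=
    calc 2 * tv ν₁ ν₂ = ∑ y, |∑ x, ((q₁ x).toReal * (K₁ x y).toReal -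
          (q₂ x).toReal * (K₂ x y).toReal)| := by
          simp only [← sum_abs_toReal_sub_eq_two_mul_tv, toReal_apply ν₁ q₁ K₁ hν₁,
            toReal_apply ν₂ q₂ K₂ hν₂, Finset.sum_sub_distrib]
      _ ≤ ∑ y, ∑ x, |(q₁ x).toReal * (K₁ x y).toReal - (q₂ x).toReal * (K₂ x y).toReal| :=
          Finset.sum_le_sum fun y _ => Finset.abs_sum_le_sum_abs _ _
      _ = ∑ x, ∑ y, |(q₁ x).toReal * (K₁ x y).toReal - (q₂ x).toReal * (K₂ x y).toReal| :=
          Finset.sum_comm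
      _ ≤ 2 * (tv q₁ q₂ + δ) := sum_sum_abs_toReal_mul_sub_le hK
  linarith

end Coupling

lemma tv_stateActionMarginal_le {S A : Type*} [Fintype S] [Fintype A]
    {T₁ T₂ : S × A → PMF S} {π₁ π₂ : S → PMF A} {δT δπ : ℝ}
    (hT : ∀ s a, tv (T₁ (s, a)) (T₂ (s, a)) ≤ δT) (hπ : ∀ s, tv (π₁ s) (π₂ s) ≤ δπ)
    {μ₁ μ₂ : ℕ → PMF S} (hμ0 : μ₁ 0 = μ₂ 0)
    (hμ₁ : ∀ t s', μ₁ (t + 1) s' = ∑ s, ∑ a, μ₁ t s * π₁ s a * T₁ (s, a) s')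
    (hμ₂ : ∀ t s', μ₂ (t + 1) s' = ∑ s, ∑ a, μ₂ t s * π₂ s a * T₂ (s, a) s')
    {p₁ p₂ : ℕ → PMF (S × A)}
    (hp₁ : ∀ t s a, p₁ t (s, a) = μ₁ t s * π₁ s a)
    (hp₂ : ∀ t s a, p₂ t (s, a) = μ₂ t s * π₂ s a) (t : ℕ) :
    tv (p₁ t) (p₂ t) ≤ t * (δπ + δT) + δπ := by
  have step_policy : ∀ t, tv (p₁ t) (p₂ t) ≤ tv (μ₁ t) (μ₂ t) + δπ := fun t =>
    tv_le_of_apply_eq_mul hπ (hp₁ t) (hp₂ t)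
  have step_dynamics : ∀ t, tv (μ₁ (t + 1)) (μ₂ (t + 1)) ≤ tv (p₁ t) (p₂ t) + δT := fun t =>
    tv_le_of_apply_eq_sum_mul (fun sa => hT sa.1 sa.2)
      (fun s' => by simp only [hμ₁, Fintype.sum_prod_type, hp₁])
      (fun s' => by simp only [hμ₂, Fintype.sum_prod_type, hp₂])
  have hμ : ∀ t : ℕ, tv (μ₁ t) (μ₂ t) ≤ t * (δπ + δT) := by
    intro t
    induction t with
    | zero => simp [hμ0, tv_self]
    | succ n ih =>
      have := (step_dynamics n).trans (add_le_add_left (step_policy n) δT)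
      push_cast
      linarith
  linarith [step_policy t, hμ t]

section Reward

variable {X : Type*} [Fintype X] {f : X → ℝ} {R : ℝ}

lemma abs_sum_toReal_mul_le (p : PMF X) (hf : ∀ x, |f x| ≤ R) :
    |∑ x, (p x).toReal * f x| ≤ R :=
  calc |∑ x, (p x).toReal * f x| ≤ ∑ x, (p x).toReal * R :=
        (Finset.abs_sum_le_sum_abs _ _).trans <| Finset.sum_le_sum fun x _ => by
          rw [abs_mul, abs_of_nonneg ENNReal.toReal_nonneg]
          exact mul_le_mul_of_nonneg_left (hf x) ENNReal.toReal_nonneg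
    _ = R := by rw [← Finset.sum_mul, PMF.sum_toReal, one_mul]

lemma abs_sum_toReal_mul_sub_le (p q : PMF X) (hf : ∀ x, |f x| ≤ R) :
    |∑ x, (p x).toReal * f x - ∑ x, (q x).toReal * f x| ≤ 2 * R * tv p q :=
  calc _ = |∑ x, ((p x).toReal - (q x).toReal) * f x| := by
        rw [← Finset.sum_sub_distrib]; simp only [sub_mul]
    _ ≤ ∑ x, |(p x).toReal - (q x).toReal| * R :=
        (Finset.abs_sum_le_sum_abs _ _).trans <| Finset.sum_le_sum fun x _ => by
          rw [abs_mul]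
          exact mul_le_mul_of_nonneg_left (hf x) (abs_nonneg _)
    _ = 2 * R * tv p q := by rw [← Finset.sum_mul, sum_abs_toReal_sub_eq_two_mul_tv]; ring

end Reward

section Discounting

variable {γ : ℝ} (hγ0 : 0 ≤ γ) (hγ1 : γ < 1)
include hγ0 hγ1

lemma summable_pow_mul_of_abs_le {f : ℕ → ℝ} {M : ℝ} (hf : ∀ t, |f t| ≤ M) :
    Summable fun t => γ ^ t * f t :=
  Summable.of_norm_bounded ((summable_geometric_of_lt_one hγ0 hγ1).mul_right M) fun t => by
    rw [Real.norm_eq_abs, abs_mul, abs_of_nonneg (pow_nonneg hγ0 t)]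
    exact mul_le_mul_of_nonneg_left (hf t) (pow_nonneg hγ0 t)

lemma abs_tsum_pow_mul_sub_le {f₁ f₂ : ℕ → ℝ} {a b : ℝ}
    (hf₁ : Summable fun t => γ ^ t * f₁ t) (hf₂ : Summable fun t => γ ^ t * f₂ t)
    (hd : ∀ t : ℕ, |f₁ t - f₂ t| ≤ a * t + b) :
    |∑' t, γ ^ t * f₁ t - ∑' t, γ ^ t * f₂ t| ≤ a * γ / (1 - γ) ^ 2 + b / (1 - γ) := by
  have hγ : ‖γ‖ < 1 := by rwa [Real.norm_eq_abs, abs_of_nonneg hγ0]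
  have hsum := ((hasSum_coe_mul_geometric_of_norm_lt_one hγ).mul_left a).add
    ((hasSum_geometric_of_lt_one hγ0 hγ1).mul_left b)
  rw [← hf₁.tsum_sub hf₂, ← Real.norm_eq_abs, mul_div_assoc, div_eq_mul_inv b]
  refine tsum_of_norm_bounded hsum fun t => ?_
  rw [Real.norm_eq_abs, ← mul_sub, abs_mul, abs_of_nonneg (pow_nonneg hγ0 t)]
  calc γ ^ t * |f₁ t - f₂ t| ≤ γ ^ t * (a * t + b) :=
        mul_le_mul_of_nonneg_left (hd t) (pow_nonneg hγ0 t)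
    _ = a * (t * γ ^ t) + b * γ ^ t := by ring

end Discounting

theorem return_gap_with_representation_error_general {S A : Type*} [Fintype S] [Fintype A]
    (ρ₀ : PMF S) (T₁ T₂ : S × A → PMF S) (π₁ π₂ : S → PMF A)
    (εT επ εS CT Cπ : ℝ)
    (hT : ∀ s a, tv (T₁ (s, a)) (T₂ (s, a)) ≤ εT + CT * εS)
    (hπ : ∀ s, tv (π₁ s) (π₂ s) ≤ επ + (1 / 2) * Cπ * εS)
    (μ₁ μ₂ : ℕ → PMF S)
    (hμ₁0 : μ₁ 0 = ρ₀) (hμ₂0 : μ₂ 0 = ρ₀)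
    (hμ₁ : ∀ t s', μ₁ (t + 1) s' = ∑ s, ∑ a, μ₁ t s * π₁ s a * T₁ (s, a) s')
    (hμ₂ : ∀ t s', μ₂ (t + 1) s' = ∑ s, ∑ a, μ₂ t s * π₂ s a * T₂ (s, a) s')
    (p₁ p₂ : ℕ → PMF (S × A))
    (hp₁ : ∀ t s a, p₁ t (s, a) = μ₁ t s * π₁ s a)
    (hp₂ : ∀ t s a, p₂ t (s, a) = μ₂ t s * π₂ s a)
    (r : S × A → ℝ) (R : ℝ) (hr : ∀ s a, |r (s, a)| ≤ R)
    (γ : ℝ) (hγ0 : 0 ≤ γ) (hγ1 : γ < 1)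
    (G₁ G₂ : ℝ)
    (hG₁ : G₁ = ∑' t : ℕ, γ ^ t * ∑ sa : S × A, (p₁ t sa).toReal * r sa)
    (hG₂ : G₂ = ∑' t : ℕ, γ ^ t * ∑ sa : S × A, (p₂ t sa).toReal * r sa) :
    |G₁ - G₂| ≤
      R * γ * (2 * επ + 2 * εT + (Cπ + 2 * CT) * εS) / (1 - γ) ^ 2 +
        R * (2 * επ + Cπ * εS) / (1 - γ) := by
  set δπ := επ + (1 / 2) * Cπ * εS
  set δT := εT + CT * εS
  have hr' : ∀ sa, |r sa| ≤ R := fun sa => hr sa.1 sa.2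
  have hR : 0 ≤ R := (abs_nonneg _).trans (abs_sum_toReal_mul_le (p₁ 0) hr')
  have hd : ∀ t : ℕ, |∑ sa, (p₁ t sa).toReal * r sa - ∑ sa, (p₂ t sa).toReal * r sa| ≤
      2 * R * (δπ + δT) * t + 2 * R * δπ := fun t =>
    calc _ ≤ 2 * R * tv (p₁ t) (p₂ t) := abs_sum_toReal_mul_sub_le _ _ hr'
      _ ≤ 2 * R * (t * (δπ + δT) + δπ) := by
          gcongr
          exact tv_stateActionMarginal_le hT hπ (hμ₁0.trans hμ₂0.symm) hμ₁ hμ₂ hp₁ hp₂ t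
      _ = _ := by ring
  rw [hG₁, hG₂]
  calc _ ≤ 2 * R * (δπ + δT) * γ / (1 - γ) ^ 2 + 2 * R * δπ / (1 - γ) :=
        abs_tsum_pow_mul_sub_le hγ0 hγ1 (summable_pow_mul_of_abs_le hγ0 hγ1 fun t =>
          abs_sum_toReal_mul_le (p₁ t) hr') (summable_pow_mul_of_abs_le hγ0 hγ1 fun t =>
          abs_sum_toReal_mul_le (p₂ t) hr') hd
    _ = _ := by ring

/-- For two MDPs with a common initial distribution whose kernels are
`(ε_T + C_T·ε_S)`-close and whose policies are `(ε_π + (1/2)·C_π·ε_S)`-close in total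
variation, with reward bounded by `R` and discount `γ ∈ [0,1)`, the discounted returns
satisfy `|G¹(π¹) − G²(π²)| ≤ Rγ[2ε_π + 2ε_T + (C_π + 2C_T)ε_S]/(1−γ)²
  + R(2ε_π + C_π ε_S)/(1−γ)`. -/
theorem return_gap_with_representation_error {S A : Type*} [Fintype S] [Fintype A]
    (ρ₀ : PMF S) (T₁ T₂ : S × A → PMF S) (π₁ π₂ : S → PMF A)
    (εT επ εS CT Cπ : ℝ)
    (hεT : 0 ≤ εT) (hεπ : 0 ≤ επ) (hεS : 0 ≤ εS) (hCT : 0 ≤ CT) (hCπ : 0 ≤ Cπ)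
    (hT : ∀ s a, tv (T₁ (s, a)) (T₂ (s, a)) ≤ εT + CT * εS)
    (hπ : ∀ s, tv (π₁ s) (π₂ s) ≤ επ + (1 / 2) * Cπ * εS)
    (μ₁ μ₂ : ℕ → PMF S)
    (hμ₁0 : μ₁ 0 = ρ₀) (hμ₂0 : μ₂ 0 = ρ₀)
    (hμ₁ : ∀ t s', μ₁ (t + 1) s' = ∑ s, ∑ a, μ₁ t s * π₁ s a * T₁ (s, a) s')
    (hμ₂ : ∀ t s', μ₂ (t + 1) s' = ∑ s, ∑ a, μ₂ t s * π₂ s a * T₂ (s, a) s')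
    (p₁ p₂ : ℕ → PMF (S × A))
    (hp₁ : ∀ t s a, p₁ t (s, a) = μ₁ t s * π₁ s a)
    (hp₂ : ∀ t s a, p₂ t (s, a) = μ₂ t s * π₂ s a)
    (r : S × A → ℝ) (R : ℝ) (hr : ∀ s a, |r (s, a)| ≤ R)
    (γ : ℝ) (hγ0 : 0 ≤ γ) (hγ1 : γ < 1)
    (G₁ G₂ : ℝ)
    (hG₁ : G₁ = ∑' t : ℕ, γ ^ t * ∑ sa : S × A, (p₁ t sa).toReal * r sa)
    (hG₂ : G₂ = ∑' t : ℕ, γ ^ t * ∑ sa : S × A, (p₂ t sa).toReal * r sa) :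
    |G₁ - G₂| ≤
      R * γ * (2 * επ + 2 * εT + (Cπ + 2 * CT) * εS) / (1 - γ) ^ 2 +
        R * (2 * επ + Cπ * εS) / (1 - γ) :=
  return_gap_with_representation_error_general ρ₀ T₁ T₂ π₁ π₂ εT επ εS CT Cπ hT hπ μ₁ μ₂ hμ₁0 hμ₂0
    hμ₁ hμ₂ p₁ p₂ hp₁ hp₂ r R hr γ hγ0 hγ1 G₁ G₂ hG₁ hG₂
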